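/- arXiv:1210.0605 — 2 statements merged into one kernel-verified Lean document; each statement's English description precedes it below -/
import Mathlib

section
/- Define the radial function f_p on ℝ² for p ≥ 3 by f_p(x) = √p for |x| < e^{−p}, f_p(x) = √(−log|x|) for e^{−p} ≤ |x| ≤ e^{−1}, and f_p(x) = ψ(|x|) for |x| ≥ e^{−1}, where ψ is a fixed smooth compactly supported function with ψ(e^{−1}) = 1 making f_p Lipschitz. Then ‖f_p‖_{L^2} ≤ C, ‖∇f_p‖_{L^2} ≤ C√(log p), and ‖f_p‖_{L^p} ≥ c√p, for absolute constants C, c > 0. -/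
open MeasureTheory Real
open MeasureTheory Real Set Metric
open scoped ENNReal NNReal

lemma lintegral_fun_norm_addHaar' {E : Type*} [NormedAddCommGroup E] [NormedSpace ℝ E]
    [MeasurableSpace E] [BorelSpace E] [Nontrivial E] [FiniteDimensional ℝ E]
    (μ : Measure E) [μ.IsAddHaarMeasure] {f : ℝ → ℝ≥0∞} (hf : Measurable f) :
    ∫⁻ x, f ‖x‖ ∂μ = μ.toSphere Set.univ *
      ∫⁻ y in Set.Ioi (0:ℝ), ENNReal.ofReal (y ^ (Module.finrank ℝ E - 1)) * f y := by
  calc ∫⁻ x, f ‖x‖ ∂μ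
      = ∫⁻ x in ({0}ᶜ : Set E), f ‖x‖ ∂μ := by
        rw [MeasureTheory.restrict_compl_singleton]
    _ = ∫⁻ x : ({0}ᶜ : Set E), f ‖x.1‖ ∂(μ.comap Subtype.val) :=
        (lintegral_subtype_comap (measurableSet_singleton 0).compl _).symm
    _ = ∫⁻ p : sphere (0:E) 1 × Set.Ioi (0:ℝ), f p.2.1
          ∂(μ.toSphere.prod (.volumeIoiPow (Module.finrank ℝ E - 1))) := by
        rw [← (μ.measurePreserving_homeomorphUnitSphereProd).lintegral_comp_emb
          (Homeomorph.measurableEmbedding _) (fun p => f p.2.1)]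
        simp
    _ = μ.toSphere Set.univ * ∫⁻ r : Set.Ioi (0:ℝ), f r.1
          ∂(Measure.volumeIoiPow (Module.finrank ℝ E - 1)) := by
        exact (lintegral_prod (fun p : sphere (0:E) 1 × Set.Ioi (0:ℝ) => f p.2.1)
          (hf.comp (measurable_subtype_coe.comp measurable_snd)).aemeasurable).trans
          (by simp [lintegral_const, mul_comm])
    _ = _ := by
        congr 1
        exact (lintegral_withDensity_eq_lintegral_mul _
          (by measurability : Measurable fun r : Set.Ioi (0:ℝ) =>
            ENNReal.ofReal (r.1 ^ (Module.finrank ℝ E - 1)))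
          (hf.comp measurable_subtype_coe : Measurable fun r : Set.Ioi (0:ℝ) => f r.1)).trans
          (lintegral_subtype_comap measurableSet_Ioi
            (fun y => ENNReal.ofReal (y ^ (Module.finrank ℝ E - 1)) * f y))

lemma sq_enorm_le {G : Type*} [NormedAddCommGroup G] {v : G} {w : ℝ} (h : ‖v‖ ≤ w) :
    (↑‖v‖₊ : ℝ≥0∞) ^ (2:ℝ) ≤ ENNReal.ofReal (w^2) := by
  have hw : 0 ≤ w := (norm_nonneg v).trans h
  rw [← enorm_eq_nnnorm, ← ofReal_norm]
  refine le_trans (ENNReal.rpow_le_rpow (ENNReal.ofReal_le_ofReal h) (by norm_num)) ?_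
  rw [ENNReal.ofReal_rpow_of_nonneg hw (by norm_num : (0:ℝ) ≤ 2)]
  apply ENNReal.ofReal_le_ofReal
  rw [show ((2:ℝ)) = ((2:ℕ):ℝ) by norm_num, Real.rpow_natCast]

lemma lintegral_Ioi_split4 {a b c : ℝ} (ha : 0 < a) (hab : a ≤ b) (hbc : b ≤ c) (f : ℝ → ℝ≥0∞) :
    ∫⁻ y in Ioi 0, f y = (∫⁻ y in Ioc 0 a, f y) + (∫⁻ y in Ioc a b, f y)
      + (∫⁻ y in Ioc b c, f y) + ∫⁻ y in Ioi c, f y := by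
  have h1 : Ioi (0:ℝ) = Ioc 0 a ∪ (Ioc a b ∪ (Ioc b c ∪ Ioi c)) := by
    rw [Ioc_union_Ioi_eq_Ioi hbc, Ioc_union_Ioi_eq_Ioi hab, Ioc_union_Ioi_eq_Ioi ha.le]
  have dIoc : ∀ u v w : ℝ, Disjoint (Ioc u v) (Ioi v) := fun u v w =>
    disjoint_left.2 fun x hx hx' => absurd hx.2 (not_le.2 hx')
  have d1 : Disjoint (Ioc (0:ℝ) a) (Ioc a b ∪ (Ioc b c ∪ Ioi c)) := by
    rw [Ioc_union_Ioi_eq_Ioi hbc, Ioc_union_Ioi_eq_Ioi hab]; exact dIoc 0 a a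
  have d2 : Disjoint (Ioc a b) (Ioc b c ∪ Ioi c) := by
    rw [Ioc_union_Ioi_eq_Ioi hbc]; exact dIoc a b b
  have d3 : Disjoint (Ioc b c) (Ioi c) := dIoc b c c
  rw [h1, lintegral_union (measurableSet_Ioc.union (measurableSet_Ioc.union measurableSet_Ioi)) d1,
    lintegral_union (measurableSet_Ioc.union measurableSet_Ioi) d2,
    lintegral_union measurableSet_Ioi d3]
  ring

lemma integral_inv_mul_neg_log {a : ℝ} (ha : 1 < a) :
    ∫ y in Real.exp (-a)..Real.exp (-1), (y * (-Real.log y))⁻¹ = Real.log a := by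
  have hle : Real.exp (-a) ≤ Real.exp (-1) := Real.exp_le_exp.2 (by linarith)
  have key : ∀ y ∈ Set.uIcc (Real.exp (-a)) (Real.exp (-1)),
      0 < y ∧ Real.log y < 0 := by
    intro y hy
    rw [Set.uIcc_of_le hle] at hy
    have hy0 : 0 < y := lt_of_lt_of_le (Real.exp_pos _) hy.1
    refine ⟨hy0, ?_⟩
    have := Real.log_le_log hy0 hy.2
    rw [Real.log_exp] at this
    linarith
  have hderiv : ∀ y ∈ Set.uIcc (Real.exp (-a)) (Real.exp (-1)),
      HasDerivAt (fun y => -Real.log (-Real.log y)) ((y * (-Real.log y))⁻¹) y := by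
    intro y hy
    obtain ⟨hy0, hly⟩ := key y hy
    have h1 : HasDerivAt (fun y => -Real.log y) (-y⁻¹) y := (Real.hasDerivAt_log hy0.ne').neg
    have h2 : HasDerivAt (fun y => Real.log (-Real.log y)) ((-Real.log y)⁻¹ * -y⁻¹) y :=
      (Real.hasDerivAt_log (by linarith)).comp y h1
    have := h2.neg
    refine this.congr_deriv ?_
    ring
  have hcont : ContinuousOn (fun y => (y * (-Real.log y))⁻¹)
      (Set.uIcc (Real.exp (-a)) (Real.exp (-1))) := by
    apply ContinuousOn.inv₀
    · exact continuousOn_id.mul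
        ((Real.continuousOn_log.mono (fun y hy => (key y hy).1.ne')).neg)
    · intro y hy
      have := key y hy
      have : 0 < y * (-Real.log y) := mul_pos this.1 (by linarith [this.2])
      exact this.ne'
  rw [intervalIntegral.integral_eq_sub_of_hasDerivAt hderiv
    (hcont.intervalIntegrable)]
  simp [Real.log_exp]

noncomputable abbrev E2 := EuclideanSpace ℝ (Fin 2)

lemma norm_fderiv_norm_le (x : E2) : ‖fderiv ℝ (fun y : E2 => ‖y‖) x‖ ≤ 1 := by
  simpa using norm_fderiv_le_of_lipschitz ℝ (lipschitzWith_one_norm (E := E2))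

lemma hasFDerivAt_norm (x : E2) (hx : x ≠ 0) :
    HasFDerivAt (fun y : E2 => ‖y‖) (fderiv ℝ (fun y : E2 => ‖y‖) x) x :=
  (((contDiffAt_norm ℝ hx (n := 1)).differentiableAt one_ne_zero)).hasFDerivAt

lemma mid_fderiv (x : E2) (h0 : 0 < ‖x‖) (h1 : ‖x‖ < 1) :
    ∃ D : E2 →L[ℝ] ℝ, HasFDerivAt (fun y : E2 => Real.sqrt (-Real.log ‖y‖)) D x ∧
      ‖D‖ ≤ (2 * ‖x‖ * Real.sqrt (-Real.log ‖x‖))⁻¹ := by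
  have hx : x ≠ 0 := norm_pos_iff.1 h0
  have hlogneg : Real.log ‖x‖ < 0 := Real.log_neg h0 h1
  have hpos : 0 < -Real.log ‖x‖ := by linarith
  have hlog : HasDerivAt (fun r : ℝ => -Real.log r) (-(‖x‖)⁻¹) ‖x‖ :=
    (Real.hasDerivAt_log h0.ne').neg
  have hsq : HasDerivAt (fun r : ℝ => Real.sqrt (-Real.log r))
      (-(‖x‖)⁻¹ / (2 * Real.sqrt (-Real.log ‖x‖))) ‖x‖ := hlog.sqrt hpos.ne'
  refine ⟨_, hsq.comp_hasFDerivAt x (hasFDerivAt_norm x hx), ?_⟩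
  refine le_trans (norm_smul_le (-‖x‖⁻¹ / (2 * √(-log ‖x‖))) (fderiv ℝ (fun y : E2 => ‖y‖) x)) ?_
  have hs : 0 < Real.sqrt (-Real.log ‖x‖) := Real.sqrt_pos.2 hpos
  calc ‖-(‖x‖)⁻¹ / (2 * Real.sqrt (-Real.log ‖x‖))‖ * ‖fderiv ℝ (fun y : E2 => ‖y‖) x‖
      ≤ ‖-(‖x‖)⁻¹ / (2 * Real.sqrt (-Real.log ‖x‖))‖ * 1 := by
        gcongr; exact norm_fderiv_norm_le x
    _ = (2 * ‖x‖ * Real.sqrt (-Real.log ‖x‖))⁻¹ := by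
        rw [mul_one, Real.norm_eq_abs, abs_div, abs_neg, abs_inv, abs_of_pos h0,
          abs_of_pos (by positivity : (0:ℝ) < 2 * Real.sqrt (-Real.log ‖x‖))]
        rw [div_eq_iff (by positivity)]
        field_simp

lemma sq_enorm_le' {G : Type*} [NormedAddCommGroup G] {v : G} {w : ℝ} (h : ‖v‖^2 ≤ w) :
    (↑‖v‖₊ : ℝ≥0∞) ^ (2:ℝ) ≤ ENNReal.ofReal w := by
  rw [← enorm_eq_nnnorm, ← ofReal_norm, ENNReal.ofReal_rpow_of_nonneg (norm_nonneg v) (by norm_num)]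
  refine ENNReal.ofReal_le_ofReal ?_
  rw [show ((2:ℝ)) = ((2:ℕ):ℝ) by norm_num, Real.rpow_natCast]
  exact h

lemma lintegral_radial (f : ℝ → ℝ≥0∞) (hf : Measurable f) :
    ∫⁻ x : E2, f ‖x‖ = (volume : Measure E2).toSphere Set.univ *
      ∫⁻ y in Set.Ioi (0:ℝ), ENNReal.ofReal y * f y := by
  have := lintegral_fun_norm_addHaar' (volume : Measure E2) hf
  simpa [finrank_euclideanSpace_fin] using this

lemma key_mid_integral {a : ℝ} (ha : 1 < a) :
    ∫⁻ y in Ioo (Real.exp (-a)) (Real.exp (-1)),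
      ENNReal.ofReal ((1/4) * (y * (-Real.log y))⁻¹)
      = ENNReal.ofReal ((1/4) * Real.log a) := by
  have hle : Real.exp (-a) ≤ Real.exp (-1) := Real.exp_le_exp.2 (by linarith)
  have hcont : ContinuousOn (fun y => (y * (-Real.log y))⁻¹)
      (Set.uIcc (Real.exp (-a)) (Real.exp (-1))) := by
    apply ContinuousOn.inv₀
    · refine continuousOn_id.mul ((Real.continuousOn_log.mono ?_).neg)
      intro y hy
      rw [Set.uIcc_of_le hle] at hy
      exact (lt_of_lt_of_le (Real.exp_pos _) hy.1).ne'
    · intro y hy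
      rw [Set.uIcc_of_le hle] at hy
      have hy0 : 0 < y := lt_of_lt_of_le (Real.exp_pos _) hy.1
      have hly : Real.log y < 0 := by
        have := Real.log_le_log hy0 hy.2
        rw [Real.log_exp] at this; linarith
      exact (mul_pos hy0 (by linarith)).ne'
  have hint : IntegrableOn (fun y => (1/4) * (y * (-Real.log y))⁻¹)
      (Ioo (Real.exp (-a)) (Real.exp (-1))) := by
    refine (((hcont.mono (by rw [Set.uIcc_of_le hle])).const_smul
      ((1:ℝ)/4)).integrableOn_Icc).mono_set Ioo_subset_Icc_self
  have hnn : 0 ≤ᵐ[volume.restrict (Ioo (Real.exp (-a)) (Real.exp (-1)))]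
      (fun y => (1/4) * (y * (-Real.log y))⁻¹) := by
    filter_upwards [ae_restrict_mem measurableSet_Ioo] with y hy
    have hy0 : 0 < y := lt_of_lt_of_le (Real.exp_pos _) hy.1.le
    have hly : Real.log y < 0 := by
      have := Real.log_le_log hy0 hy.2.le
      rw [Real.log_exp] at this; linarith
    have hprod : 0 < y * (-Real.log y) := mul_pos hy0 (by linarith)
    positivity
  rw [← ofReal_integral_eq_lintegral_ofReal hint hnn]
  congr 1
  rw [← integral_Ioc_eq_integral_Ioo, ← intervalIntegral.integral_of_le hle,
    intervalIntegral.integral_const_mul, integral_inv_mul_neg_log ha]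

set_option maxHeartbeats 2000000 in
/-- Sharpness of the `√p` constant: the radial function `f_p` equal to `√p` for `|x| < e^{-p}`,
`√(-log |x|)` for `e^{-p} ≤ |x| ≤ e^{-1}`, and `ψ(|x|)` for `|x| ≥ e^{-1}`, satisfies
`‖f_p‖_{L²} ≤ C`, `‖∇f_p‖_{L²} ≤ C √(log p)` and `‖f_p‖_{L^p} ≥ c √p`. -/
theorem sqrt_p_sharpness (ψ : ℝ → ℝ) (hψ_smooth : ContDiff ℝ (⊤ : ℕ∞) ψ)
    (hψ_supp : HasCompactSupport ψ) (hψ_val : ψ (Real.exp (-1)) = 1) :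
    ∃ C c : ℝ, 0 < C ∧ 0 < c ∧ ∀ p : ℝ, 3 ≤ p →
      let fp : EuclideanSpace ℝ (Fin 2) → ℝ := fun x =>
        if ‖x‖ < Real.exp (-p) then Real.sqrt p
        else if ‖x‖ ≤ Real.exp (-1) then Real.sqrt (-Real.log ‖x‖)
        else ψ ‖x‖
      eLpNorm fp 2 volume ≤ ENNReal.ofReal C ∧
      eLpNorm (fun x => fderiv ℝ fp x) 2 volume ≤ ENNReal.ofReal (C * Real.sqrt (Real.log p)) ∧
      ENNReal.ofReal (c * Real.sqrt p) ≤ eLpNorm fp (ENNReal.ofReal p) volume := by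
  classical
  obtain ⟨M, hM⟩ := hψ_smooth.continuous.bounded_above_of_compact_support hψ_supp
  have hψ'c : Continuous (deriv ψ) := hψ_smooth.continuous_deriv (by simp)
  obtain ⟨M', hM'⟩ := hψ'c.bounded_above_of_compact_support hψ_supp.deriv
  obtain ⟨r₀, hr₀⟩ := hψ_supp.isBounded.subset_closedBall 0
  set R : ℝ := max r₀ 1 with hRdef
  have hR1 : (1:ℝ) ≤ R := le_max_right _ _
  have hRsupp : ∀ y : ℝ, R < y → ψ y = 0 := by
    intro y hy
    apply image_eq_zero_of_notMem_tsupport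
    intro hmem
    have h := hr₀ hmem
    rw [Real.closedBall_eq_Icc] at h
    have : y ≤ r₀ := by simpa using h.2
    have : r₀ ≤ R := le_max_left _ _
    linarith [h.2]
  have hRsupp' : ∀ y : ℝ, R < y → deriv ψ y = 0 := by
    intro y hy
    by_contra hne
    have hmem : y ∈ tsupport ψ := support_deriv_subset (by simpa [Function.mem_support] using hne)
    have h := hr₀ hmem
    rw [Real.closedBall_eq_Icc] at h
    have : r₀ ≤ R := le_max_left _ _
    linarith [h.2]
  have hM0 : 0 ≤ M := le_trans (norm_nonneg _) (hM 0)
  have hM'0 : 0 ≤ M' := le_trans (norm_nonneg _) (hM' 0)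
  set T := (volume : Measure E2).toSphere Set.univ with hT
  have hTne : T ≠ ⊤ := measure_ne_top _ _
  set A := T.toReal with hA
  have hA0 : 0 ≤ A := ENNReal.toReal_nonneg
  have hTA : T = ENNReal.ofReal A := (ENNReal.ofReal_toReal hTne).symm
  set B := volume (ball (0 : E2) 1) with hB
  have hB0 : B ≠ 0 := (measure_ball_pos _ _ one_pos).ne'
  have hBt : B ≠ ⊤ := measure_ball_lt_top.ne
  set b : ℝ := min B.toReal 1 with hb
  have hb0 : 0 < b := lt_min (ENNReal.toReal_pos hB0 hBt) one_pos
  have hb1 : b ≤ 1 := min_le_right _ _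
  set C1 : ℝ := Real.sqrt (A * (1 + R^2*M^2)) with hC1
  set C2 : ℝ := Real.sqrt (A * (1/4 + R^2*M'^2)) with hC2
  have hC10 : 0 ≤ C1 := Real.sqrt_nonneg _
  have hC20 : 0 ≤ C2 := Real.sqrt_nonneg _
  refine ⟨max C1 C2 + 1, Real.exp (-2) * b, by positivity, by positivity, ?_⟩
  intro p hp
  intro fp
  have hfp : fp = (fun x : E2 =>
      if ‖x‖ < Real.exp (-p) then Real.sqrt p
      else if ‖x‖ ≤ Real.exp (-1) then Real.sqrt (-Real.log ‖x‖)
      else ψ ‖x‖) := rfl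
  have hp0 : (0:ℝ) < p := by linarith
  have hp1 : (1:ℝ) < p := by linarith
  have hlogp : 1 ≤ Real.log p := by
    rw [Real.le_log_iff_exp_le hp0]
    exact le_trans (le_of_lt (lt_trans Real.exp_one_lt_d9 (by norm_num))) hp
  have hlogp0 : 0 ≤ Real.log p := by linarith
  have hepe1 : Real.exp (-p) < Real.exp (-1) := Real.exp_lt_exp.2 (by linarith)
  have hep0 : (0:ℝ) < Real.exp (-p) := Real.exp_pos _
  have he10 : (0:ℝ) < Real.exp (-1) := Real.exp_pos _
  have he11 : Real.exp (-1) < 1 := Real.exp_lt_one_iff.2 (by norm_num)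
  have he1R : Real.exp (-1) ≤ R := le_trans he11.le hR1
  -- the radial majorant for `fp`
  set Φ : ℝ → ℝ≥0∞ := fun y => if y ≤ Real.exp (-1) then ENNReal.ofReal (-Real.log y)
    else if y ≤ R then ENNReal.ofReal (M^2) else 0 with hΦ
  have hΦm : Measurable Φ := by
    refine Measurable.ite measurableSet_Iic
      (ENNReal.measurable_ofReal.comp (Real.measurable_log.neg)) ?_
    exact Measurable.ite measurableSet_Iic measurable_const measurable_const
  -- the radial majorant for the gradient
  set Φg : ℝ → ℝ≥0∞ := fun y => if y ≤ Real.exp (-p) then 0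
    else if y < Real.exp (-1) then ENNReal.ofReal ((4*y^2*(-Real.log y))⁻¹)
    else if y ≤ R then ENNReal.ofReal (M'^2) else 0 with hΦg
  have hΦgm : Measurable Φg := by
    refine Measurable.ite measurableSet_Iic measurable_const ?_
    refine Measurable.ite measurableSet_Iio ?_
      (Measurable.ite measurableSet_Iic measurable_const measurable_const)
    exact ENNReal.measurable_ofReal.comp (((measurable_const.mul (measurable_id.pow_const 2)).mul Real.measurable_log.neg).inv)
  have hne0 : ∀ᵐ x : E2, x ≠ 0 := by
    rw [ae_iff]
    simpa [not_not] using measure_singleton (0 : E2)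
  -- First claim
  have claim1 : eLpNorm fp 2 volume ≤ ENNReal.ofReal (max C1 C2 + 1) := by
    have hae1 : ∀ᵐ x : E2, (↑‖fp x‖₊ : ℝ≥0∞) ^ (2:ℝ) ≤ Φ ‖x‖ := by
      filter_upwards [hne0] with x hx
      have hxn : 0 < ‖x‖ := norm_pos_iff.2 hx
      by_cases h1 : ‖x‖ < Real.exp (-p)
      · have hval : fp x = Real.sqrt p := by rw [hfp]; simp only [if_pos h1]
        have hΦx : Φ ‖x‖ = ENNReal.ofReal (-Real.log ‖x‖) := by
          rw [hΦ]; simp only [if_pos (le_of_lt (h1.trans hepe1))]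
        rw [hval, hΦx]
        apply sq_enorm_le'
        have hlog : Real.log ‖x‖ < -p := by
          have := Real.log_lt_log hxn h1
          rwa [Real.log_exp] at this
        rw [Real.norm_eq_abs, sq_abs, Real.sq_sqrt hp0.le]
        linarith
      · by_cases h2 : ‖x‖ ≤ Real.exp (-1)
        · have hval : fp x = Real.sqrt (-Real.log ‖x‖) := by
            rw [hfp]; simp only [if_neg h1, if_pos h2]
          have hΦx : Φ ‖x‖ = ENNReal.ofReal (-Real.log ‖x‖) := by
            rw [hΦ]; simp only [if_pos h2]
          rw [hval, hΦx]
          apply sq_enorm_le'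
          have hlog : Real.log ‖x‖ < 0 := Real.log_neg hxn (lt_of_le_of_lt h2 he11)
          rw [Real.norm_eq_abs, sq_abs, Real.sq_sqrt (by linarith)]
        · have hval : fp x = ψ ‖x‖ := by rw [hfp]; simp only [if_neg h1, if_neg h2]
          by_cases h3 : ‖x‖ ≤ R
          · have hΦx : Φ ‖x‖ = ENNReal.ofReal (M^2) := by
              rw [hΦ]; simp only [if_neg h2, if_pos h3]
            rw [hval, hΦx]
            exact sq_enorm_le' (pow_le_pow_left₀ (norm_nonneg _) (hM _) 2)
          · have hΦx : Φ ‖x‖ = 0 := by rw [hΦ]; simp only [if_neg h2, if_neg h3]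
            rw [hval, hΦx, hRsupp _ (not_le.1 h3)]
            simp
    have hinner : (∫⁻ y in Ioi (0:ℝ), ENNReal.ofReal y * Φ y) ≤
        ENNReal.ofReal (1 + R^2*M^2) := by
      rw [lintegral_Ioi_split4 he10 (le_refl (Real.exp (-1))) he1R]
      have p1 : (∫⁻ y in Ioc (0:ℝ) (Real.exp (-1)), ENNReal.ofReal y * Φ y) ≤ 1 := by
        calc (∫⁻ y in Ioc (0:ℝ) (Real.exp (-1)), ENNReal.ofReal y * Φ y)
            ≤ ∫⁻ _ in Ioc (0:ℝ) (Real.exp (-1)), 1 := by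
              refine setLIntegral_mono' measurableSet_Ioc fun y hy => ?_
              have hy0 : 0 < y := hy.1
              have hΦy : Φ y = ENNReal.ofReal (-Real.log y) := by
                rw [hΦ]; simp only [if_pos hy.2]
              rw [hΦy, ← ENNReal.ofReal_mul hy0.le]
              refine ENNReal.ofReal_le_one.2 ?_
              have hlb : -Real.log y ≤ y⁻¹ - 1 := by
                have := Real.log_le_sub_one_of_pos (inv_pos.2 hy0)
                rwa [Real.log_inv] at this
              have h2 : y * (-Real.log y) ≤ y * (y⁻¹ - 1) :=
                mul_le_mul_of_nonneg_left hlb hy0.le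
              have h3 : y * (y⁻¹ - 1) = 1 - y := by field_simp
              linarith
          _ = volume (Ioc (0:ℝ) (Real.exp (-1))) := setLIntegral_one _
          _ ≤ 1 := by
              rw [Real.volume_Ioc]
              exact ENNReal.ofReal_le_one.2 (by linarith)
      have p2 : (∫⁻ y in Ioc (Real.exp (-1)) (Real.exp (-1)),
          ENNReal.ofReal y * Φ y) = 0 := by
        simp [Ioc_self]
      have p3 : (∫⁻ y in Ioc (Real.exp (-1)) R, ENNReal.ofReal y * Φ y) ≤
          ENNReal.ofReal (R^2*M^2) := by
        calc (∫⁻ y in Ioc (Real.exp (-1)) R, ENNReal.ofReal y * Φ y)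
            ≤ ∫⁻ _ in Ioc (Real.exp (-1)) R, ENNReal.ofReal (R * M^2) := by
              refine setLIntegral_mono' measurableSet_Ioc fun y hy => ?_
              have hΦy : Φ y = ENNReal.ofReal (M^2) := by
                rw [hΦ]; simp only [if_neg (not_le.2 hy.1), if_pos hy.2]
              rw [hΦy, ← ENNReal.ofReal_mul (le_trans he10.le hy.1.le)]
              exact ENNReal.ofReal_le_ofReal
                (mul_le_mul_of_nonneg_right hy.2 (by positivity))
          _ = ENNReal.ofReal (R * M^2) * volume (Ioc (Real.exp (-1)) R) :=
              setLIntegral_const _ _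
          _ ≤ ENNReal.ofReal (R * M^2) * ENNReal.ofReal R := by
              rw [Real.volume_Ioc]
              exact mul_le_mul_right (ENNReal.ofReal_le_ofReal (by linarith)) _
          _ = ENNReal.ofReal (R^2*M^2) := by
              rw [← ENNReal.ofReal_mul (by positivity)]
              ring_nf
      have p4 : (∫⁻ y in Ioi R, ENNReal.ofReal y * Φ y) = 0 := by
        rw [setLIntegral_congr_fun measurableSet_Ioi
          (fun y (hy : R < y) => ?_), lintegral_zero]
        have h2 : ¬ y ≤ Real.exp (-1) := by push_neg; linarith
        have h3 : ¬ y ≤ R := by push_neg; linarith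
        rw [hΦ]; simp only [if_neg h2, if_neg h3, mul_zero]
      calc (∫⁻ y in Ioc (0:ℝ) (Real.exp (-1)), ENNReal.ofReal y * Φ y)
            + (∫⁻ y in Ioc (Real.exp (-1)) (Real.exp (-1)), ENNReal.ofReal y * Φ y)
            + (∫⁻ y in Ioc (Real.exp (-1)) R, ENNReal.ofReal y * Φ y)
            + (∫⁻ y in Ioi R, ENNReal.ofReal y * Φ y)
          ≤ 1 + 0 + ENNReal.ofReal (R^2*M^2) + 0 :=
            add_le_add (add_le_add (add_le_add p1 p2.le) p3) p4.le
        _ = ENNReal.ofReal 1 + ENNReal.ofReal (R^2*M^2) := by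
            rw [ENNReal.ofReal_one]; ring
        _ = ENNReal.ofReal (1 + R^2*M^2) := by
            rw [← ENNReal.ofReal_add (by norm_num) (by positivity)]
    rw [eLpNorm_eq_lintegral_rpow_enorm_toReal two_ne_zero ENNReal.ofNat_ne_top]
    simp only [ENNReal.toReal_ofNat]
    calc (∫⁻ x : E2, (↑‖fp x‖₊ : ℝ≥0∞) ^ (2:ℝ)) ^ ((1:ℝ)/2)
        ≤ (∫⁻ x : E2, Φ ‖x‖) ^ ((1:ℝ)/2) :=
          ENNReal.rpow_le_rpow (lintegral_mono_ae hae1) (by norm_num)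
      _ = (T * ∫⁻ y in Ioi (0:ℝ), ENNReal.ofReal y * Φ y) ^ ((1:ℝ)/2) := by
          rw [lintegral_radial Φ hΦm]
      _ ≤ (ENNReal.ofReal (A * (1 + R^2*M^2))) ^ ((1:ℝ)/2) := by
          refine ENNReal.rpow_le_rpow ?_ (by norm_num)
          rw [hTA, ENNReal.ofReal_mul hA0]
          exact mul_le_mul_right hinner _
      _ ≤ ENNReal.ofReal (max C1 C2 + 1) := by
          rw [ENNReal.ofReal_rpow_of_nonneg (by positivity) (by norm_num)]
          refine ENNReal.ofReal_le_ofReal ?_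
          rw [← Real.sqrt_eq_rpow]
          calc Real.sqrt (A * (1 + R^2*M^2)) = C1 := rfl
            _ ≤ max C1 C2 := le_max_left _ _
            _ ≤ max C1 C2 + 1 := by linarith
  -- Second claim
  have claim2 : eLpNorm (fun x => fderiv ℝ fp x) 2 volume ≤
      ENNReal.ofReal ((max C1 C2 + 1) * Real.sqrt (Real.log p)) := by
    have hsp1 : ∀ᵐ x : E2, ‖x‖ ≠ Real.exp (-p) := by
      rw [ae_iff]
      have : {x : E2 | ¬ ‖x‖ ≠ Real.exp (-p)} = sphere (0:E2) (Real.exp (-p)) := by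
        ext x; simp [mem_sphere_zero_iff_norm]
      rw [this]
      exact Measure.addHaar_sphere _ _ _
    have hsp2 : ∀ᵐ x : E2, ‖x‖ ≠ Real.exp (-1) := by
      rw [ae_iff]
      have : {x : E2 | ¬ ‖x‖ ≠ Real.exp (-1)} = sphere (0:E2) (Real.exp (-1)) := by
        ext x; simp [mem_sphere_zero_iff_norm]
      rw [this]
      exact Measure.addHaar_sphere _ _ _
    have hae2 : ∀ᵐ x : E2, (↑‖fderiv ℝ fp x‖₊ : ℝ≥0∞) ^ (2:ℝ) ≤ Φg ‖x‖ := by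
      filter_upwards [hne0, hsp1, hsp2] with x hx0 hx1 hx2
      have hxn : 0 < ‖x‖ := norm_pos_iff.2 hx0
      rcases lt_trichotomy ‖x‖ (Real.exp (-p)) with hlt | heq | hgt
      · have hev : fp =ᶠ[nhds x] (fun _ => Real.sqrt p) := by
          have ho : IsOpen {y : E2 | ‖y‖ < Real.exp (-p)} :=
            isOpen_lt continuous_norm continuous_const
          filter_upwards [ho.mem_nhds hlt] with y hy
          rw [hfp]; simp only [if_pos hy]
        rw [hev.fderiv_eq, fderiv_fun_const]
        simp
      · exact absurd heq hx1
      · rcases lt_trichotomy ‖x‖ (Real.exp (-1)) with hlt1 | heq1 | hgt1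
        · obtain ⟨D, hD, hDn⟩ := mid_fderiv x hxn (hlt1.trans he11)
          have hev : fp =ᶠ[nhds x] (fun y => Real.sqrt (-Real.log ‖y‖)) := by
            have ho : IsOpen {y : E2 | Real.exp (-p) < ‖y‖ ∧ ‖y‖ < Real.exp (-1)} :=
              (isOpen_lt continuous_const continuous_norm).inter
                (isOpen_lt continuous_norm continuous_const)
            filter_upwards [ho.mem_nhds ⟨hgt, hlt1⟩] with y hy
            rw [hfp]; simp only [if_neg (not_lt.2 hy.1.le), if_pos hy.2.le]
          rw [hev.fderiv_eq, hD.fderiv]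
          have hlogx : 0 < -Real.log ‖x‖ := by
            have := Real.log_neg hxn (hlt1.trans he11); linarith
          have hΦgx : Φg ‖x‖ = ENNReal.ofReal ((4*‖x‖^2*(-Real.log ‖x‖))⁻¹) := by
            rw [hΦg]; simp only [if_neg (not_le.2 hgt), if_pos hlt1]
          rw [hΦgx]
          apply sq_enorm_le'
          calc ‖D‖^2 ≤ ((2*‖x‖*Real.sqrt (-Real.log ‖x‖))⁻¹)^2 :=
              pow_le_pow_left₀ (norm_nonneg D) hDn 2
            _ = (4*‖x‖^2*(-Real.log ‖x‖))⁻¹ := by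
                rw [inv_pow]
                congr 1
                rw [mul_pow, mul_pow, Real.sq_sqrt hlogx.le]
                norm_num
        · exact absurd heq1 hx2
        · have hψd : HasDerivAt ψ (deriv ψ ‖x‖) ‖x‖ :=
            (hψ_smooth.differentiable (by simp) ‖x‖).hasDerivAt
          have hev : fp =ᶠ[nhds x] (fun y => ψ ‖y‖) := by
            have ho : IsOpen {y : E2 | Real.exp (-1) < ‖y‖} :=
              isOpen_lt continuous_const continuous_norm
            filter_upwards [ho.mem_nhds hgt1] with y hy
            rw [hfp]
            simp only [if_neg (not_lt.2 (le_of_lt (hepe1.trans hy))), if_neg (not_le.2 hy)]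
          have hF : HasFDerivAt (fun y : E2 => ψ ‖y‖)
              (deriv ψ ‖x‖ • fderiv ℝ (fun y : E2 => ‖y‖) x) x :=
            hψd.comp_hasFDerivAt x (hasFDerivAt_norm x hx0)
          rw [hev.fderiv_eq, hF.fderiv]
          by_cases h3 : ‖x‖ ≤ R
          · have hΦgx : Φg ‖x‖ = ENNReal.ofReal (M'^2) := by
              rw [hΦg]
              simp only [if_neg (not_le.2 (hepe1.trans hgt1)), if_neg (not_lt.2 hgt1.le),
                if_pos h3]
            rw [hΦgx]
            apply sq_enorm_le'
            refine pow_le_pow_left₀ (norm_nonneg _) ?_ 2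
            refine le_trans (norm_smul_le (deriv ψ ‖x‖) (fderiv ℝ (fun y : E2 => ‖y‖) x)) ?_
            calc ‖deriv ψ ‖x‖‖ * ‖fderiv ℝ (fun y : E2 => ‖y‖) x‖
                ≤ M' * 1 := mul_le_mul (hM' _) (norm_fderiv_norm_le x) (norm_nonneg _) hM'0
              _ = M' := mul_one _
          · have : deriv ψ ‖x‖ = 0 := hRsupp' _ (not_le.1 h3)
            rw [this, zero_smul]
            simp
    have hinner : (∫⁻ y in Ioi (0:ℝ), ENNReal.ofReal y * Φg y) ≤
        ENNReal.ofReal ((1/4 + R^2*M'^2) * Real.log p) := by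
      rw [lintegral_Ioi_split4 hep0 hepe1.le he1R]
      have p1 : (∫⁻ y in Ioc (0:ℝ) (Real.exp (-p)), ENNReal.ofReal y * Φg y) = 0 := by
        rw [setLIntegral_congr_fun measurableSet_Ioc
          (fun y hy => ?_), lintegral_zero]
        rw [hΦg]; simp only [if_pos hy.2, mul_zero]
      have p2 : (∫⁻ y in Ioc (Real.exp (-p)) (Real.exp (-1)), ENNReal.ofReal y * Φg y)
          = ENNReal.ofReal ((1/4) * Real.log p) := by
        rw [← setLIntegral_congr Ioo_ae_eq_Ioc]
        rw [setLIntegral_congr_fun measurableSet_Ioo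
          (fun y hy => ?_), key_mid_integral hp1]
        have hy0 : 0 < y := lt_trans hep0 hy.1
        have hly : 0 < -Real.log y := by
          have := Real.log_neg hy0 (hy.2.trans he11); linarith
        rw [hΦg]
        simp only [if_neg (not_le.2 hy.1), if_pos hy.2]
        rw [← ENNReal.ofReal_mul hy0.le]
        congr 1
        rw [show (4*y^2*(-Real.log y)) = (4*y)*(y*(-Real.log y)) by ring, mul_inv, ← mul_assoc,
          show y * (4*y)⁻¹ = 1/4 by rw [mul_inv, mul_comm (4:ℝ)⁻¹, ← mul_assoc, mul_inv_cancel₀ hy0.ne']; norm_num]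
      have p3 : (∫⁻ y in Ioc (Real.exp (-1)) R, ENNReal.ofReal y * Φg y) ≤
          ENNReal.ofReal (R^2*M'^2) := by
        calc (∫⁻ y in Ioc (Real.exp (-1)) R, ENNReal.ofReal y * Φg y)
            ≤ ∫⁻ _ in Ioc (Real.exp (-1)) R, ENNReal.ofReal (R * M'^2) := by
              refine setLIntegral_mono' measurableSet_Ioc fun y hy => ?_
              have hΦgy : Φg y = ENNReal.ofReal (M'^2) := by
                rw [hΦg]
                simp only [if_neg (not_le.2 (hepe1.trans hy.1)), if_neg (not_lt.2 hy.1.le),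
                  if_pos hy.2]
              rw [hΦgy, ← ENNReal.ofReal_mul (le_trans he10.le hy.1.le)]
              exact ENNReal.ofReal_le_ofReal
                (mul_le_mul_of_nonneg_right hy.2 (by positivity))
          _ = ENNReal.ofReal (R * M'^2) * volume (Ioc (Real.exp (-1)) R) :=
              setLIntegral_const _ _
          _ ≤ ENNReal.ofReal (R * M'^2) * ENNReal.ofReal R := by
              rw [Real.volume_Ioc]
              exact mul_le_mul_right (ENNReal.ofReal_le_ofReal (by linarith)) _
          _ = ENNReal.ofReal (R^2*M'^2) := by
              rw [← ENNReal.ofReal_mul (by positivity)]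
              ring_nf
      have p4 : (∫⁻ y in Ioi R, ENNReal.ofReal y * Φg y) = 0 := by
        rw [setLIntegral_congr_fun measurableSet_Ioi
          (fun y (hy : R < y) => ?_), lintegral_zero]
        have h1 : ¬ y ≤ Real.exp (-p) := by push_neg; linarith
        have h2 : ¬ y < Real.exp (-1) := by push_neg; linarith
        have h3 : ¬ y ≤ R := by push_neg; linarith
        rw [hΦg]; simp only [if_neg h1, if_neg h2, if_neg h3, mul_zero]
      calc (∫⁻ y in Ioc (0:ℝ) (Real.exp (-p)), ENNReal.ofReal y * Φg y)
            + (∫⁻ y in Ioc (Real.exp (-p)) (Real.exp (-1)), ENNReal.ofReal y * Φg y)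
            + (∫⁻ y in Ioc (Real.exp (-1)) R, ENNReal.ofReal y * Φg y)
            + (∫⁻ y in Ioi R, ENNReal.ofReal y * Φg y)
          ≤ 0 + ENNReal.ofReal ((1/4) * Real.log p) + ENNReal.ofReal (R^2*M'^2) + 0 :=
            add_le_add (add_le_add (add_le_add p1.le p2.le) p3) p4.le
        _ = ENNReal.ofReal ((1/4) * Real.log p) + ENNReal.ofReal (R^2*M'^2) := by ring
        _ ≤ ENNReal.ofReal ((1/4 + R^2*M'^2) * Real.log p) := by
            rw [← ENNReal.ofReal_add (by positivity) (by positivity)]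
            refine ENNReal.ofReal_le_ofReal ?_
            have h4 : R^2*M'^2 ≤ R^2*M'^2 * Real.log p :=
              le_mul_of_one_le_right (mul_nonneg (sq_nonneg R) (sq_nonneg M')) hlogp
            have h5 : (1/4+R^2*M'^2)*Real.log p
                = 1/4*Real.log p + R^2*M'^2*Real.log p := by ring
            linarith
    rw [eLpNorm_eq_lintegral_rpow_enorm_toReal two_ne_zero ENNReal.ofNat_ne_top]
    simp only [ENNReal.toReal_ofNat]
    calc (∫⁻ x : E2, (↑‖fderiv ℝ fp x‖₊ : ℝ≥0∞) ^ (2:ℝ)) ^ ((1:ℝ)/2)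
        ≤ (∫⁻ x : E2, Φg ‖x‖) ^ ((1:ℝ)/2) :=
          ENNReal.rpow_le_rpow (lintegral_mono_ae hae2) (by norm_num)
      _ = (T * ∫⁻ y in Ioi (0:ℝ), ENNReal.ofReal y * Φg y) ^ ((1:ℝ)/2) := by
          rw [lintegral_radial Φg hΦgm]
      _ ≤ (ENNReal.ofReal (A * ((1/4 + R^2*M'^2) * Real.log p))) ^ ((1:ℝ)/2) := by
          refine ENNReal.rpow_le_rpow ?_ (by norm_num)
          rw [hTA, ENNReal.ofReal_mul hA0]
          exact mul_le_mul_right hinner _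
      _ ≤ ENNReal.ofReal ((max C1 C2 + 1) * Real.sqrt (Real.log p)) := by
          rw [ENNReal.ofReal_rpow_of_nonneg (by positivity) (by norm_num)]
          refine ENNReal.ofReal_le_ofReal ?_
          rw [← Real.sqrt_eq_rpow, ← mul_assoc, Real.sqrt_mul (by positivity)]
          refine mul_le_mul_of_nonneg_right ?_ (Real.sqrt_nonneg _)
          calc Real.sqrt (A * (1/4 + R^2*M'^2)) = C2 := rfl
            _ ≤ max C1 C2 := le_max_right _ _
            _ ≤ max C1 C2 + 1 := by linarith
  -- Third claim
  have claim3 : ENNReal.ofReal ((Real.exp (-2) * b) * Real.sqrt p) ≤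
      eLpNorm fp (ENNReal.ofReal p) volume := by
    set P := ENNReal.ofReal p with hP
    have hPne0 : P ≠ 0 := (ENNReal.ofReal_pos.2 hp0).ne'
    have hPtop : P ≠ ⊤ := ENNReal.ofReal_ne_top
    have hPt : P.toReal = p := ENNReal.toReal_ofReal hp0.le
    set s : Set E2 := ball (0 : E2) (Real.exp (-p)) with hs
    have hmono : eLpNorm (s.indicator fun _ => Real.sqrt p) P volume ≤
        eLpNorm fp P volume := by
      refine eLpNorm_mono fun x => ?_
      by_cases hxs : x ∈ s
      · rw [Set.indicator_of_mem hxs]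
        have : fp x = Real.sqrt p := by
          rw [hfp]; simp only [if_pos (mem_ball_zero_iff.1 hxs)]
        rw [this]
      · rw [Set.indicator_of_notMem hxs]
        simp [norm_nonneg]
    refine le_trans ?_ hmono
    rw [eLpNorm_indicator_const measurableSet_ball hPne0 hPtop, hPt]
    have hvol : volume s = ENNReal.ofReal (Real.exp (-p) ^ 2) * B := by
      rw [hs, Measure.addHaar_ball volume 0 hep0.le, hB]
      simp [finrank_euclideanSpace_fin]
    have hnn : (↑‖Real.sqrt p‖₊ : ℝ≥0∞) = ENNReal.ofReal (Real.sqrt p) := by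
      rw [← enorm_eq_nnnorm, ← ofReal_norm, Real.norm_eq_abs, abs_of_nonneg (Real.sqrt_nonneg _)]
    have hkey : ENNReal.ofReal (Real.exp (-2) * b) ≤ volume s ^ ((1:ℝ)/p) := by
      have h1 : (ENNReal.ofReal (Real.exp (-p) ^ 2)) ^ ((1:ℝ)/p)
          = ENNReal.ofReal (Real.exp (-2)) := by
        rw [ENNReal.ofReal_rpow_of_nonneg (by positivity) (by positivity)]
        congr 1
        rw [Real.rpow_def_of_pos (by positivity), Real.log_pow, Real.log_exp]
        congr 1
        field_simp
        norm_num
      have h2 : ENNReal.ofReal b ≤ B ^ ((1:ℝ)/p) := by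
        calc ENNReal.ofReal b = (ENNReal.ofReal b) ^ (1:ℝ) := (ENNReal.rpow_one _).symm
          _ ≤ (ENNReal.ofReal b) ^ ((1:ℝ)/p) := by
              refine ENNReal.rpow_le_rpow_of_exponent_ge (ENNReal.ofReal_le_one.2 hb1) ?_
              rw [div_le_one hp0]; linarith
          _ ≤ B ^ ((1:ℝ)/p) := by
              refine ENNReal.rpow_le_rpow ?_ (by positivity)
              exact ENNReal.ofReal_le_of_le_toReal (min_le_left _ _)
      rw [hvol, ENNReal.mul_rpow_of_nonneg _ _ (by positivity), h1]
      calc ENNReal.ofReal (Real.exp (-2) * b)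
          = ENNReal.ofReal (Real.exp (-2)) * ENNReal.ofReal b :=
            ENNReal.ofReal_mul (Real.exp_pos _).le
        _ ≤ ENNReal.ofReal (Real.exp (-2)) * B ^ ((1:ℝ)/p) := mul_le_mul_right h2 _
    calc ENNReal.ofReal ((Real.exp (-2) * b) * Real.sqrt p)
        = ENNReal.ofReal (Real.sqrt p) * ENNReal.ofReal (Real.exp (-2) * b) := by
          rw [← ENNReal.ofReal_mul (Real.sqrt_nonneg _)]
          ring_nf
      _ ≤ (↑‖Real.sqrt p‖₊ : ℝ≥0∞) * volume s ^ ((1:ℝ)/p) := by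
          rw [hnn]
          exact mul_le_mul_right hkey _
  exact ⟨claim1, claim2, claim3⟩
end

section
/- Suppose y : [0,∞) → [0,∞) is a C¹ function satisfying y'(t) ≤ A·log(y(t)+B)·y(t) for all t ≥ 0, where A > 0 and B ≥ e are constants. Then y(t) ≤ (y(0)+B)^{exp(At)} for all t ≥ 0; in particular y remains finite for all time. -/
open Real

/-- Log-Gronwall lemma: if `y' ≤ A log(y+B) y` with `A > 0`, `B ≥ e`, `y ≥ 0`, then
`y(t) ≤ (y 0 + B)^(exp (A t))`. -/
theorem log_gronwall (y y' : ℝ → ℝ) (A B : ℝ) (hA : 0 < A) (hB : Real.exp 1 ≤ B)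
    (hy_nonneg : ∀ t ≥ (0:ℝ), 0 ≤ y t)
    (hderiv : ∀ t ≥ (0:ℝ), HasDerivAt y (y' t) t)
    (hcont : ContinuousOn y' (Set.Ici 0))
    (hineq : ∀ t ≥ (0:ℝ), y' t ≤ A * Real.log (y t + B) * y t) :
    ∀ t ≥ (0:ℝ), y t ≤ (y 0 + B) ^ (Real.exp (A * t)) := by
  intro t ht
  have hBpos : (0:ℝ) < B := lt_of_lt_of_le (Real.exp_pos 1) hB
  have hpos : ∀ x ≥ (0:ℝ), 0 < y x + B := fun x hx =>
    add_pos_of_nonneg_of_pos (hy_nonneg x hx) hBpos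
  set z : ℝ → ℝ := fun x => Real.log (y x + B) with hz
  have hzderiv : ∀ x ≥ (0:ℝ), HasDerivAt z (y' x / (y x + B)) x := by
    intro x hx
    exact ((hderiv x hx).add_const B).log (ne_of_gt (hpos x hx))
  -- z ≥ 1 on [0,∞)
  have hz1 : ∀ x ≥ (0:ℝ), 1 ≤ z x := by
    intro x hx
    have : Real.exp 1 ≤ y x + B :=
      le_add_of_nonneg_of_le (hy_nonneg x hx) hB
    calc (1:ℝ) = Real.log (Real.exp 1) := (Real.log_exp 1).symm
      _ ≤ Real.log (y x + B) := Real.log_le_log (Real.exp_pos 1) this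
  -- slope bound
  have hbound : ∀ x ∈ Set.Ico (0:ℝ) t, y' x / (y x + B) ≤ A * z x + 0 := by
    intro x hx
    rw [add_zero]
    have hx0 : (0:ℝ) ≤ x := hx.1
    have hp := hpos x hx0
    have h1 : y' x / (y x + B) ≤ A * Real.log (y x + B) * y x / (y x + B) :=
      div_le_div_of_nonneg_right (hineq x hx0) hp.le |>.trans_eq rfl
    have hLnn : 0 ≤ Real.log (y x + B) := le_trans zero_le_one (hz1 x hx0)
    have h2 : A * Real.log (y x + B) * y x / (y x + B) ≤ A * Real.log (y x + B) := by
      rw [div_le_iff₀ hp]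
      have : y x ≤ y x + B := le_add_of_nonneg_right hBpos.le
      calc A * Real.log (y x + B) * y x ≤ A * Real.log (y x + B) * (y x + B) := by
            apply mul_le_mul_of_nonneg_left this
            positivity
        _ = A * Real.log (y x + B) * (y x + B) := rfl
    exact h1.trans h2
  have hzcont : ContinuousOn z (Set.Icc 0 t) := by
    intro x hx
    exact ((hzderiv x hx.1).continuousAt).continuousWithinAt
  have key := le_gronwallBound_of_liminf_deriv_right_le hzcont
    (fun x hx r hr =>
      ((hzderiv x hx.1).hasDerivWithinAt (s := Set.Ici x)).liminf_right_slope_le hr)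
    (le_refl (z 0)) hbound
  have hzt : z t ≤ z 0 * Real.exp (A * t) := by
    have := key t ⟨ht, le_refl t⟩
    rwa [sub_zero, gronwallBound_ε0] at this
  -- conclude
  have hyB : y t + B ≤ (y 0 + B) ^ (Real.exp (A * t)) := by
    have h0 : (0:ℝ) < y 0 + B := hpos 0 le_rfl
    have : Real.exp (z t) ≤ Real.exp (z 0 * Real.exp (A * t)) := Real.exp_le_exp.2 hzt
    rw [hz] at this
    rw [Real.exp_log (hpos t ht)] at this
    calc y t + B ≤ Real.exp (Real.log (y 0 + B) * Real.exp (A * t)) := this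
      _ = (y 0 + B) ^ (Real.exp (A * t)) := by
          rw [Real.rpow_def_of_pos h0, mul_comm]
  exact le_trans (le_add_of_nonneg_right hBpos.le) hyB
end
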